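/- Let A₀ be the ℍ-valued 1-form on the open set {(x, y) ∈ ℍ² : x ≠ 0, y ≠ 0} ⊆ ℝ⁸ defined by A₀(x, y)(u, w) = Im(|y|²·x⁻¹·u + |x|²·y⁻¹·w)/(|x|² + |y|²). Then A₀ is smooth and its curvature F = dA₀ + A₀∧A₀ is given by F(x, y)((u₁, w₁), (u₂, w₂)) = (|x|² + |y|²)⁻² · Im[ |y|²·x⁻¹·(u₁·ū₂ − u₂·ū₁)·x + |x|²·y⁻¹·(w₁·w̄₂ − w₂·w̄₁)·y − 2·(x̄·u₁·w̄₂·y − x̄·u₂·w̄₁·y) ] for all u₁, w₁, u₂, w₂ ∈ ℍ. -/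

import Mathlib

/-!
Since `x⁻¹ = x̄ / |x|²`, in the variables `X = |x|²`, `Y = |y|²`, `a = x̄ u`, `c = ȳ w` the form
reads `A₀ = (X + Y)⁻¹ Im (Y/X · a + X/Y · c)`. This involves no quaternionic inversion, so it is
visibly smooth where `X, Y ≠ 0`, and differentiating it is the quotient rule. In the direction
`(u', w')`, `X` moves by `2 Re (x̄ u')` and `a` by `ū' u = X⁻¹ · conj (x̄ u') (x̄ u)`. Hence, putting
`a, b = x̄ u₁, x̄ u₂` and `c, d = ȳ w₁, ȳ w₂`, the curvature becomes a rational identity in `X`, `Y`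
and four free quaternions, which is checked componentwise.
-/

open Quaternion

noncomputable section

/-- The standard G₂-instanton connection form on ℍ² ≅ ℝ⁸. -/
def A0 : ℍ[ℝ] × ℍ[ℝ] → ℍ[ℝ] × ℍ[ℝ] → ℍ[ℝ] := fun p t =>
  ((‖p.1‖ ^ 2 + ‖p.2‖ ^ 2)⁻¹ : ℝ) •
    ((‖p.2‖ ^ 2 : ℝ) • (p.1⁻¹ * t.1) + (‖p.1‖ ^ 2 : ℝ) • (p.2⁻¹ * t.2)).im

namespace Quaternion

instance {R : Type*} [CommRing R] [StarRing R] [TrivialStar R] : StarModule R ℍ[R] :=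
  ⟨fun r a => by rw [Quaternion.star_smul, star_trivial r]⟩

def imCLM : ℍ[ℝ] →L[ℝ] ℍ[ℝ] where
  toFun q := q.im
  map_add' := im_add
  map_smul' r q := im_smul q r
  cont := continuous_im

theorem imCLM_apply (q : ℍ[ℝ]) : imCLM q = q.im := rfl

@[fun_prop]
theorem contDiff_im {n : WithTop ℕ∞} : ContDiff ℝ n (fun q : ℍ[ℝ] => q.im) :=
  imCLM.contDiff

@[fun_prop]
theorem contDiff_star {n : WithTop ℕ∞} : ContDiff ℝ n (fun q : ℍ[ℝ] => star q) :=
  (starL' ℝ).contDiff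

theorem norm_sq_eq_normSq (x : ℍ[ℝ]) : ‖x‖ ^ 2 = normSq x := by
  rw [sq, normSq_eq_norm_mul_self]

theorem inv_mul_eq_smul_star_mul (x u : ℍ[ℝ]) : x⁻¹ * u = (‖x‖ ^ 2)⁻¹ • (star x * u) := by
  rw [inv_def, smul_mul_assoc, norm_sq_eq_normSq]

theorem inner_eq_re_star_mul (x u : ℍ[ℝ]) : inner ℝ x u = (star x * u).re := by
  simp only [inner_def, re_mul, re_star, imI_star, imJ_star, imK_star]
  ring

theorem star_star_mul_mul_star_mul (x u v : ℍ[ℝ]) :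
    star (star x * u) * (star x * v) = (‖x‖ ^ 2) • (star u * v) := by
  rw [star_mul, star_star, mul_assoc, ← mul_assoc x, self_mul_star, ← mul_assoc, ← coe_commutes,
    mul_assoc, coe_mul_eq_smul, norm_sq_eq_normSq]

theorem inv_mul_mul_star_sub_mul_star_mul (x u v : ℍ[ℝ]) :
    x⁻¹ * (u * star v - v * star u) * x =
      (‖x‖ ^ 2)⁻¹ • ((star x * u) * star (star x * v) - (star x * v) * star (star x * u)) := by
  simp only [inv_def, norm_sq_eq_normSq, star_mul, star_star, smul_mul_assoc, mul_sub, sub_mul,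
    mul_assoc, smul_sub]

end Quaternion

def connForm (X Y : ℝ) (a c : ℍ[ℝ]) : ℍ[ℝ] := (X + Y)⁻¹ • ((Y / X) • a + (X / Y) • c).im

/-- The differential of `connForm` at `(X, Y, a, c)`, applied to `(X', Y', a', c')`. -/
def connFormDeriv (X Y : ℝ) (a c : ℍ[ℝ]) (X' Y' : ℝ) (a' c' : ℍ[ℝ]) : ℍ[ℝ] :=
  (X + Y)⁻¹ • (((Y' * X - Y * X') / X ^ 2) • a + (Y / X) • a'
      + ((X' * Y - X * Y') / Y ^ 2) • c + (X / Y) • c').im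
    - ((X' + Y') / (X + Y) ^ 2) • ((Y / X) • a + (X / Y) • c).im

theorem A0_eq_connForm (p t : ℍ[ℝ] × ℍ[ℝ]) :
    A0 p t = connForm (‖p.1‖ ^ 2) (‖p.2‖ ^ 2) (star p.1 * t.1) (star p.2 * t.2) := by
  simp only [A0, connForm, inv_mul_eq_smul_star_mul, smul_smul, div_eq_mul_inv]

section Calculus

variable {E : Type*} [NormedAddCommGroup E] [NormedSpace ℝ E] {X Y : E → ℝ} {a c : E → ℍ[ℝ]}
  {p : E}

theorem ContDiffAt.connForm {n : WithTop ℕ∞} (hX : ContDiffAt ℝ n X p) (hY : ContDiffAt ℝ n Y p)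
    (ha : ContDiffAt ℝ n a p) (hc : ContDiffAt ℝ n c p) (hX0 : X p ≠ 0) (hY0 : Y p ≠ 0)
    (hXY : X p + Y p ≠ 0) :
    ContDiffAt ℝ n (fun q => connForm (X q) (Y q) (a q) (c q)) p := by
  simp only [_root_.connForm]
  fun_prop (disch := assumption)

theorem fderiv_connForm_apply {X' Y' : E →L[ℝ] ℝ} {a' c' : E →L[ℝ] ℍ[ℝ]}
    (hX : HasFDerivAt X X' p) (hY : HasFDerivAt Y Y' p)
    (ha : HasFDerivAt a a' p) (hc : HasFDerivAt c c' p) (hX0 : X p ≠ 0) (hY0 : Y p ≠ 0)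
    (hXY : X p + Y p ≠ 0) (v : E) :
    fderiv ℝ (fun q => connForm (X q) (Y q) (a q) (c q)) p v =
      connFormDeriv (X p) (Y p) (a p) (c p) (X' v) (Y' v) (a' v) (c' v) := by
  have hinvX := (hasFDerivAt_inv hX0).comp p hX
  have hinvY := (hasFDerivAt_inv hY0).comp p hY
  have hinvXY := (hasFDerivAt_inv hXY).comp p (hX.add hY)
  have H : HasFDerivAt (fun q => connForm (X q) (Y q) (a q) (c q)) _ p :=
    hinvXY.smul (imCLM.hasFDerivAt.comp p
      (((hY.mul hinvX).smul ha).add ((hX.mul hinvY).smul hc)))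
  rw [H.fderiv]
  simp only [Function.comp_apply, Pi.add_apply, Pi.mul_apply, add_apply, smul_apply,
    ContinuousLinearMap.comp_apply, ContinuousLinearMap.smulRight_apply,
    ContinuousLinearMap.toSpanSingleton_apply, imCLM_apply, map_add, map_smul, im_add, im_smul,
    smul_eq_mul, connFormDeriv]
  match_scalars <;> field_simp <;> ring

end Calculus

theorem connForm_curvature {X Y : ℝ} (hX : X ≠ 0) (hY : Y ≠ 0) (hXY : X + Y ≠ 0)
    (a c b d : ℍ[ℝ]) :
    connFormDeriv X Y b d (2 * a.re) (2 * c.re) (X⁻¹ • (star a * b)) (Y⁻¹ • (star c * d))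
        - connFormDeriv X Y a c (2 * b.re) (2 * d.re) (X⁻¹ • (star b * a)) (Y⁻¹ • (star d * c))
        + (connForm X Y a c * connForm X Y b d - connForm X Y b d * connForm X Y a c) =
      ((X + Y) ^ 2)⁻¹ • ((Y / X) • (a * star b - b * star a) + (X / Y) • (c * star d - d * star c)
        - (2 : ℝ) • (a * star d - b * star c)).im := by
  ext <;>
    simp only [connForm, connFormDeriv, im_add, im_sub, im_smul, smul_add, smul_eq_mul, re_add,
      re_sub, re_smul, re_im, re_mul, re_star, imI_add, imI_sub, imI_smul, imI_im, imI_mul,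
      imI_star, imJ_add, imJ_sub, imJ_smul, imJ_im, imJ_mul, imJ_star, imK_add, imK_sub, imK_smul,
      imK_im, imK_mul, imK_star, mul_zero, add_zero, zero_mul, zero_add, zero_sub, sub_self,
      neg_mul, mul_neg, sub_neg_eq_add] <;>
    field_simp <;> ring

theorem contDiffOn_A0 :
    ContDiffOn ℝ (⊤ : ℕ∞) (fun q : (ℍ[ℝ] × ℍ[ℝ]) × (ℍ[ℝ] × ℍ[ℝ]) => A0 q.1 q.2)
      ({p : ℍ[ℝ] × ℍ[ℝ] | p.1 ≠ 0 ∧ p.2 ≠ 0} ×ˢ Set.univ) := by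
  rintro ⟨⟨x, y⟩, t⟩ ⟨⟨hx, hy⟩, -⟩
  simp only [A0_eq_connForm]
  refine (ContDiffAt.connForm ?_ ?_ (by fun_prop) (by fun_prop) ?_ ?_ ?_).contDiffWithinAt
  · exact ContDiffAt.norm_sq ℝ (by fun_prop)
  · exact ContDiffAt.norm_sq ℝ (by fun_prop)
  all_goals dsimp only; positivity

theorem fderiv_A0_apply {x y : ℍ[ℝ]} (hx : x ≠ 0) (hy : y ≠ 0) (u w u' w' : ℍ[ℝ]) :
    fderiv ℝ (fun p => A0 p (u, w)) (x, y) (u', w') =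
      connFormDeriv (‖x‖ ^ 2) (‖y‖ ^ 2) (star x * u) (star y * w)
        (2 * (star x * u').re) (2 * (star y * w').re)
        ((‖x‖ ^ 2)⁻¹ • (star (star x * u') * (star x * u)))
        ((‖y‖ ^ 2)⁻¹ • (star (star y * w') * (star y * w))) := by
  have hX : HasFDerivAt (fun p : ℍ[ℝ] × ℍ[ℝ] => ‖p.1‖ ^ 2) _ (x, y) := hasFDerivAt_fst.norm_sq
  have hY : HasFDerivAt (fun p : ℍ[ℝ] × ℍ[ℝ] => ‖p.2‖ ^ 2) _ (x, y) := hasFDerivAt_snd.norm_sq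
  have ha := (hasFDerivAt_fst (𝕜 := ℝ) (p := (x, y))).star.mul_const' u
  have hc := (hasFDerivAt_snd (𝕜 := ℝ) (p := (x, y))).star.mul_const' w
  simp only [A0_eq_connForm]
  rw [fderiv_connForm_apply hX hY ha hc (by positivity) (by positivity) (by positivity),
    star_star_mul_mul_star_mul, star_star_mul_mul_star_mul, inv_smul_smul₀ (by positivity),
    inv_smul_smul₀ (by positivity)]
  simp only [smul_apply, ContinuousLinearMap.comp_apply, ContinuousLinearMap.coe_fst',
    ContinuousLinearMap.coe_snd', coe_innerSL_apply, inner_eq_re_star_mul, nsmul_eq_mul,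
    Nat.cast_ofNat, ContinuousLinearEquiv.coe_coe, starL'_apply, MulOpposite.smul_eq_mul_unop,
    MulOpposite.unop_op]

theorem A0_smooth_and_curvature :
    ContDiffOn ℝ (⊤ : ℕ∞) (fun q : (ℍ[ℝ] × ℍ[ℝ]) × (ℍ[ℝ] × ℍ[ℝ]) => A0 q.1 q.2)
      ({p : ℍ[ℝ] × ℍ[ℝ] | p.1 ≠ 0 ∧ p.2 ≠ 0} ×ˢ (Set.univ : Set (ℍ[ℝ] × ℍ[ℝ]))) ∧
    ∀ x y : ℍ[ℝ], x ≠ 0 → y ≠ 0 → ∀ u1 w1 u2 w2 : ℍ[ℝ],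
      (fderiv ℝ (fun p => A0 p (u2, w2)) (x, y) (u1, w1) -
            fderiv ℝ (fun p => A0 p (u1, w1)) (x, y) (u2, w2)) +
          (A0 (x, y) (u1, w1) * A0 (x, y) (u2, w2) -
            A0 (x, y) (u2, w2) * A0 (x, y) (u1, w1)) =
        (((‖x‖ ^ 2 + ‖y‖ ^ 2) ^ 2)⁻¹ : ℝ) •
          ((‖y‖ ^ 2 : ℝ) • (x⁻¹ * (u1 * star u2 - u2 * star u1) * x) +
              (‖x‖ ^ 2 : ℝ) • (y⁻¹ * (w1 * star w2 - w2 * star w1) * y) -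
              (2 : ℝ) • (star x * u1 * star w2 * y - star x * u2 * star w1 * y)).im := by
  refine ⟨contDiffOn_A0, fun x y hx hy u1 w1 u2 w2 => ?_⟩
  rw [fderiv_A0_apply hx hy, fderiv_A0_apply hx hy, A0_eq_connForm, A0_eq_connForm,
    connForm_curvature (by positivity) (by positivity) (by positivity),
    inv_mul_mul_star_sub_mul_star_mul, inv_mul_mul_star_sub_mul_star_mul]
  simp only [star_mul, star_star, smul_smul, mul_assoc, div_eq_mul_inv]
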